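/- arXiv:2103.04688 — 3 statements merged into one kernel-verified Lean document; each statement's English description precedes it below -/
import Mathlib

section
/- Fix real constants b > 0, κ > 0, β̄ > 0, set d := √(κ² + 2bβ̄²), and for t ≤ s define B(t,s) := 2b(e^{d(s−t)} − 1)/((κ + d)e^{d(s−t)} − κ + d). Then for all real t ≤ s: 0 ≤ B(t,s) ≤ b/κ and B(t,s) ≤ b(s − t). -/
/-!
With `E = e^{dτ} ≥ 1` and `τ = s - t`, the denominator of `B` is `d(E + 1) + κ(E - 1)`.
Since `κ ≤ d`, the inequality `B ≤ b/κ` reduces to `κ(E - 1) ≤ d(E + 1)`, and, dropping the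
`κ(E - 1)` term, `B ≤ bτ` reduces to `2(e^x - 1) ≤ x(e^x + 1)` for `x = dτ ≥ 0`, i.e. to
`tanh(x/2) ≤ x/2`.
-/

open Real

lemma Real.two_mul_exp_sub_one_le {x : ℝ} (hx : 0 ≤ x) :
    2 * (exp x - 1) ≤ x * (exp x + 1) := by
  let g : ℝ → ℝ := fun y => y * (exp y + 1) - 2 * (exp y - 1)
  have hg : ∀ y, HasDerivAt g (exp y * (y - 1) + 1) y := fun y =>
    (((hasDerivAt_id' y).mul ((hasDerivAt_exp y).add_const 1)).sub
      (((hasDerivAt_exp y).sub_const 1).const_mul 2)).congr_deriv (by ring)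
  have hg' : ∀ y, 0 ≤ exp y * (y - 1) + 1 := fun y => by
    have h := mul_le_mul_of_nonneg_right (one_sub_le_exp_neg y) (exp_pos y).le
    rw [← exp_add, neg_add_cancel, exp_zero] at h
    linarith
  have h := monotone_of_hasDerivAt_nonneg hg hg' hx
  simp only [g, exp_zero] at h
  linarith

/-- `B(t, s)` as a function of `τ = s - t`. -/
noncomputable def riccatiSol (b κ d τ : ℝ) : ℝ :=
  2 * b * (exp (d * τ) - 1) / (d * (exp (d * τ) + 1) + κ * (exp (d * τ) - 1))

section riccatiSol

variable {b κ d τ : ℝ}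

lemma riccatiSol_denom_pos (hd : 0 < d) (hκ : 0 ≤ κ) (hτ : 0 ≤ τ) :
    0 < d * (exp (d * τ) + 1) + κ * (exp (d * τ) - 1) := by
  have hE : 1 ≤ exp (d * τ) := one_le_exp (mul_nonneg hd.le hτ)
  exact add_pos_of_pos_of_nonneg (by positivity) (mul_nonneg hκ (by linarith))

lemma riccatiSol_nonneg (hb : 0 ≤ b) (hd : 0 < d) (hκ : 0 ≤ κ) (hτ : 0 ≤ τ) :
    0 ≤ riccatiSol b κ d τ := by
  have hE : 1 ≤ exp (d * τ) := one_le_exp (mul_nonneg hd.le hτ)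
  exact div_nonneg (mul_nonneg (by positivity) (by linarith))
    (riccatiSol_denom_pos hd hκ hτ).le

lemma riccatiSol_le_div (hb : 0 ≤ b) (hκ : 0 < κ) (hκd : κ ≤ d) (hτ : 0 ≤ τ) :
    riccatiSol b κ d τ ≤ b / κ := by
  have hd : 0 < d := hκ.trans_le hκd
  have hE : 1 ≤ exp (d * τ) := one_le_exp (mul_nonneg hd.le hτ)
  rw [riccatiSol, div_le_div_iff₀ (riccatiSol_denom_pos hd hκ.le hτ) hκ]
  have h : κ * (exp (d * τ) - 1) ≤ d * (exp (d * τ) + 1) :=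
    mul_le_mul hκd (by linarith) (by linarith) hd.le
  nlinarith [mul_le_mul_of_nonneg_left h hb]

lemma riccatiSol_le_mul (hb : 0 ≤ b) (hd : 0 < d) (hκ : 0 ≤ κ) (hτ : 0 ≤ τ) :
    riccatiSol b κ d τ ≤ b * τ := by
  have hE : 1 ≤ exp (d * τ) := one_le_exp (mul_nonneg hd.le hτ)
  rw [riccatiSol, div_le_iff₀ (riccatiSol_denom_pos hd hκ hτ)]
  calc 2 * b * (exp (d * τ) - 1) = b * (2 * (exp (d * τ) - 1)) := by ring
    _ ≤ b * (d * τ * (exp (d * τ) + 1)) :=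
      mul_le_mul_of_nonneg_left (two_mul_exp_sub_one_le (mul_nonneg hd.le hτ)) hb
    _ = b * τ * (d * (exp (d * τ) + 1)) := by ring
    _ ≤ b * τ * (d * (exp (d * τ) + 1) + κ * (exp (d * τ) - 1)) := by
      gcongr
      exact le_add_of_nonneg_right (mul_nonneg hκ (by linarith))

end riccatiSol

theorem riccati_B_bounds_general
    (b κ β : ℝ) (hb : 0 < b) (hκ : 0 < κ)
    (d : ℝ) (hd : d = Real.sqrt (κ ^ 2 + 2 * b * β ^ 2))
    (B : ℝ → ℝ → ℝ)
    (hB : ∀ t s : ℝ, t ≤ s → B t s = 2 * b * (Real.exp (d * (s - t)) - 1)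
      / ((κ + d) * Real.exp (d * (s - t)) - κ + d)) :
    ∀ t s : ℝ, t ≤ s →
      0 ≤ B t s ∧ B t s ≤ b / κ ∧ B t s ≤ b * (s - t) := by
  intro t s hts
  have hκd : κ ≤ d := hd ▸ (le_abs_self κ).trans
    (abs_le_sqrt (le_add_of_nonneg_right (by positivity)))
  have hd0 : 0 < d := hκ.trans_le hκd
  have hτ : 0 ≤ s - t := sub_nonneg.2 hts
  have hBsol : B t s = riccatiSol b κ d (s - t) := by
    rw [hB t s hts, riccatiSol]
    ring_nf
  rw [hBsol]
  exact ⟨riccatiSol_nonneg hb.le hd0 hκ.le hτ, riccatiSol_le_div hb.le hκ hκd hτ,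
    riccatiSol_le_mul hb.le hd0 hκ.le hτ⟩

/-- Uniform bounds for the explicit Riccati solution `B(t,s)`:
`0 ≤ B(t,s) ≤ b/κ` and `B(t,s) ≤ b(s−t)` for all `t ≤ s`. -/
theorem riccati_B_bounds
    (b κ β : ℝ) (hb : 0 < b) (hκ : 0 < κ) (hβ : 0 < β)
    (d : ℝ) (hd : d = Real.sqrt (κ ^ 2 + 2 * b * β ^ 2))
    (B : ℝ → ℝ → ℝ)
    (hB : ∀ t s : ℝ, t ≤ s → B t s = 2 * b * (Real.exp (d * (s - t)) - 1)
      / ((κ + d) * Real.exp (d * (s - t)) - κ + d)) :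
    ∀ t s : ℝ, t ≤ s →
      0 ≤ B t s ∧ B t s ≤ b / κ ∧ B t s ≤ b * (s - t) :=
  riccati_B_bounds_general b κ β hb hκ d hd B hB
end

section
/- Fix real constants b > 0, κ > 0, β̄ > 0, ν > 0, c₀ ∈ ℝ, T > 0, δ > 0 and ψ ∈ ℝ, set d := √(κ² + 2bβ̄²), and for t ≤ s define B(t,s) := 2b(e^{d(s−t)} − 1)/((κ + d)e^{d(s−t)} − κ + d) and A(t,s) := (4bν/(κ² − d²))·[ln((κ+d)e^{ds} − (κ−d)e^{dt}) − ln(2d) − (1/2)((κ+d)s − (κ−d)t)] + c₀(s − t). Define g(t,y) := δ^ψ ∫_t^T e^{A(t,s) − B(t,s)y} ds for (t,y) ∈ [0,T) × [0,∞). Then g has a partial derivative in t and first and second partial derivatives in y at every (t,y) ∈ [0,T) × [0,∞), and these satisfy ∂_t g(t,y) + (c₀ − b y) g(t,y) + (ν − κ y) ∂_y g(t,y) + (1/2) β̄² y ∂_{yy} g(t,y) + δ^ψ = 0. -/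
open Real Set Function

/-!
Write `F(t, y, s) = exp (A(t,s) - B(t,s) y)`. Because `d² = κ² + 2bβ̄²`, `B` solves the Riccati
equation `∂ₜB = κB + ½β̄²B² - b` and `∂ₜA = νB - c₀`, so `∂ₜF + (c₀ - by) F + (ν - κy) ∂_yF
+ ½β̄²y ∂_yyF = 0` pointwise, with `∂_yF = -B F` and `∂_yyF = B² F`. Differentiating under the
integral sign (Leibniz's rule for a jointly continuous integrand and derivative) carries this over
to `g`; the variable lower limit contributes `-δ^ψ F(t, y, t) = -δ^ψ`, which is the source term.
-/

namespace intervalIntegral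

variable {E : Type*} [NormedAddCommGroup E] [NormedSpace ℝ E]

theorem hasDerivAt_integral_of_continuous_deriv {f f' : ℝ → ℝ → E} {a b : ℝ}
    (hf : ∀ τ, Continuous (f τ)) (hf' : Continuous (uncurry f'))
    (hderiv : ∀ τ s, HasDerivAt (f · s) (f' τ s) τ) (t : ℝ) :
    HasDerivAt (fun τ => ∫ s in a..b, f τ s) (∫ s in a..b, f' t s) t := by
  obtain ⟨M, hM⟩ :=
    ((isCompact_closedBall t 1).prod isCompact_uIcc).exists_bound_of_continuousOn hf'.continuousOn
  refine (hasDerivAt_integral_of_dominated_loc_of_deriv_le (bound := fun _ => M)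
    (Metric.ball_mem_nhds t one_pos) (.of_forall fun τ => (hf τ).aestronglyMeasurable)
    ((hf t).intervalIntegrable _ _) (hf'.comp (.prodMk_right t)).aestronglyMeasurable
    (.of_forall fun s hs τ hτ =>
      hM (τ, s) ⟨Metric.ball_subset_closedBall hτ, uIoc_subset_uIcc hs⟩)
    intervalIntegrable_const (.of_forall fun s _ τ _ => hderiv τ s)).2

variable [CompleteSpace E]

theorem hasDerivAt_integral_diagonal {f : ℝ → ℝ → E} {a : ℝ}
    (hf : ∀ τ, Continuous (f τ)) (hfa : ContinuousAt (uncurry f) (a, a)) :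
    HasDerivAt (fun τ => ∫ s in a..τ, f τ s) (f a a) a := by
  rw [hasDerivAt_iff_isLittleO, Asymptotics.isLittleO_iff]
  intro ε hε
  obtain ⟨r, hr, hclose⟩ := Metric.continuousAt_iff.mp hfa ε hε
  filter_upwards [Metric.ball_mem_nhds a hr] with τ hτ
  have hsub : (∫ s in a..τ, f τ s) - (τ - a) • f a a = ∫ s in a..τ, (f τ s - f a a) := by
    rw [integral_sub ((hf τ).intervalIntegrable _ _) intervalIntegrable_const, integral_const]
  simp only [integral_same, sub_zero, hsub, Real.norm_eq_abs]
  refine norm_integral_le_of_norm_le_const (f := fun s => f τ s - f a a) fun s hs => ?_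
  have hs : s ∈ Metric.ball a r := by
    rw [Real.ball_eq_Ioo] at hτ ⊢
    exact ordConnected_Ioo.uIcc_subset (by simpa using hr) hτ (uIoc_subset_uIcc hs)
  rw [← dist_eq_norm]
  exact (hclose (x := (τ, s)) (by rw [Prod.dist_eq]; exact max_lt hτ hs)).le

theorem hasDerivAt_integral_left_of_continuous_deriv {f f' : ℝ → ℝ → E} {b : ℝ}
    (hf : Continuous (uncurry f)) (hf' : Continuous (uncurry f'))
    (hderiv : ∀ τ s, HasDerivAt (f · s) (f' τ s) τ) (t : ℝ) :
    HasDerivAt (fun τ => ∫ s in τ..b, f τ s) ((∫ s in t..b, f' t s) - f t t) t := by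
  have hfτ : ∀ τ, Continuous (f τ) := fun τ => hf.comp (.prodMk_right τ)
  have hsplit : (fun τ => ∫ s in τ..b, f τ s) =
      fun τ => (∫ s in t..b, f τ s) - ∫ s in t..τ, f τ s :=
    funext fun τ => (integral_interval_sub_left ((hfτ τ).intervalIntegrable _ _)
      ((hfτ τ).intervalIntegrable _ _)).symm
  rw [hsplit]
  exact (hasDerivAt_integral_of_continuous_deriv hfτ hf' hderiv t).sub
    (hasDerivAt_integral_diagonal hfτ hf.continuousAt)

theorem hasDerivAt_integral_pow_mul_exp_sub_mul {p q : ℝ → ℝ} (hp : Continuous p)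
    (hq : Continuous q) (a b : ℝ) (n : ℕ) (z : ℝ) :
    HasDerivAt (fun z => ∫ s in a..b, (-q s) ^ n * exp (p s - q s * z))
      (∫ s in a..b, (-q s) ^ (n + 1) * exp (p s - q s * z)) z := by
  refine hasDerivAt_integral_of_continuous_deriv
    (f := fun z s => (-q s) ^ n * exp (p s - q s * z))
    (f' := fun z s => (-q s) ^ (n + 1) * exp (p s - q s * z))
    (fun z => by fun_prop) (by unfold uncurry; fun_prop) (fun z s => ?_) z
  refine ((((hasDerivAt_id' z).const_mul (q s)).const_sub (p s)).exp.const_mul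
    ((-q s) ^ n)).congr_deriv ?_
  ring

end intervalIntegral

open intervalIntegral

lemma abs_lt_sqrt_sq_add {x c : ℝ} (hc : 0 < c) : |x| < √(x ^ 2 + c) := by
  rw [← sqrt_sq_eq_abs]
  exact sqrt_lt_sqrt (sq_nonneg x) (by linarith)

noncomputable def hestonB (b κ d t s : ℝ) : ℝ :=
  2 * b * (exp (d * (s - t)) - 1) / ((κ + d) * exp (d * (s - t)) - κ + d)

noncomputable def hestonA (b κ ν c₀ d t s : ℝ) : ℝ :=
  (4 * b * ν / (κ ^ 2 - d ^ 2)) *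
      (log ((κ + d) * exp (d * s) - (κ - d) * exp (d * t))
        - log (2 * d) - (1 / 2) * ((κ + d) * s - (κ - d) * t))
    + c₀ * (s - t)

section Heston

variable {b κ β ν c₀ d : ℝ}

lemma hestonB_denom_pos (hκd : |κ| < d) (x : ℝ) : 0 < (κ + d) * exp x - κ + d := by
  obtain ⟨h₁, h₂⟩ := abs_lt.mp hκd
  nlinarith [mul_pos (by linarith : 0 < κ + d) (exp_pos x)]

lemma hestonA_log_arg_pos (hκd : |κ| < d) (t s : ℝ) :
    0 < (κ + d) * exp (d * s) - (κ - d) * exp (d * t) := by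
  obtain ⟨h₁, h₂⟩ := abs_lt.mp hκd
  nlinarith [mul_pos (by linarith : 0 < κ + d) (exp_pos (d * s)),
    mul_pos (by linarith : 0 < d - κ) (exp_pos (d * t))]

lemma hestonB_eq_exp_sub_div (hκd : |κ| < d) (t s : ℝ) :
    hestonB b κ d t s = 2 * b * (exp (d * s) - exp (d * t)) /
      ((κ + d) * exp (d * s) - (κ - d) * exp (d * t)) := by
  have hden := hestonB_denom_pos hκd (d * (s - t))
  have hG := hestonA_log_arg_pos hκd t s
  rw [hestonB, div_eq_div_iff hden.ne' hG.ne', mul_sub d s t, exp_sub]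
  field_simp
  ring

lemma hestonB_self (t : ℝ) : hestonB b κ d t t = 0 := by
  simp [hestonB]

lemma hestonA_self (hd : 0 < d) (t : ℝ) : hestonA b κ ν c₀ d t t = 0 := by
  rw [hestonA, ← sub_mul, show κ + d - (κ - d) = 2 * d by ring,
    log_mul (by positivity) (exp_ne_zero _), log_exp]
  ring

lemma continuous_hestonB (hκd : |κ| < d) : Continuous (uncurry (hestonB b κ d)) :=
  Continuous.div (by fun_prop) (by fun_prop) fun p => (hestonB_denom_pos hκd _).ne'

lemma continuous_hestonA (hκd : |κ| < d) : Continuous (uncurry (hestonA b κ ν c₀ d)) := by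
  have hlog : Continuous fun p : ℝ × ℝ =>
      log ((κ + d) * exp (d * p.2) - (κ - d) * exp (d * p.1)) :=
    Continuous.log (by fun_prop) fun p => (hestonA_log_arg_pos hκd _ _).ne'
  unfold uncurry hestonA
  fun_prop

lemma hasDerivAt_hestonB (hb : b ≠ 0) (hd : d ^ 2 = κ ^ 2 + 2 * b * β ^ 2) (hκd : |κ| < d)
    (t s : ℝ) :
    HasDerivAt (hestonB b κ d · s)
      (κ * hestonB b κ d t s + β ^ 2 / 2 * hestonB b κ d t s ^ 2 - b) t := by
  have hE : HasDerivAt (fun t => exp (d * (s - t))) (-d * exp (d * (s - t))) t := by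
    simpa [mul_comm] using (((hasDerivAt_id t).const_sub s).const_mul d).exp
  have hden := hestonB_denom_pos hκd (d * (s - t))
  refine (((hE.sub_const 1).const_mul (2 * b)).div
    (((hE.const_mul (κ + d)).sub_const κ).add_const d) hden.ne').congr_deriv ?_
  have hβ : β ^ 2 = (d ^ 2 - κ ^ 2) / (2 * b) := by field_simp; linarith
  rw [hestonB, hβ]
  generalize exp (d * (s - t)) = E at hden ⊢
  generalize hD : (κ + d) * E - κ + d = D at hden ⊢
  field_simp
  rw [← hD]
  ring

lemma hasDerivAt_hestonA (hκd : |κ| < d) (t s : ℝ) :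
    HasDerivAt (hestonA b κ ν c₀ d · s) (ν * hestonB b κ d t s - c₀) t := by
  have hexp : HasDerivAt (fun t => exp (d * t)) (d * exp (d * t)) t := by
    simpa [mul_comm] using ((hasDerivAt_id t).const_mul d).exp
  have hG := hestonA_log_arg_pos hκd t s
  have hlog := ((hexp.const_mul (κ - d)).const_sub ((κ + d) * exp (d * s))).log hG.ne'
  have hlin := (((hasDerivAt_id' t).const_mul (κ - d)).const_sub ((κ + d) * s)).const_mul
    (1 / 2 : ℝ)
  refine ((((hlog.sub_const (log (2 * d))).sub hlin).const_mul _).add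
    (((hasDerivAt_id t).const_sub s).const_mul c₀)).congr_deriv ?_
  have hκd2 : κ ^ 2 - d ^ 2 ≠ 0 := by
    nlinarith [abs_nonneg κ, sq_abs κ, abs_lt.mp hκd]
  rw [hestonB_eq_exp_sub_div hκd]
  field_simp
  ring

lemma hasDerivAt_integral_exp_heston (hb : b ≠ 0) (hd : d ^ 2 = κ ^ 2 + 2 * b * β ^ 2)
    (hκd : |κ| < d) (y T t : ℝ) :
    HasDerivAt
      (fun τ => ∫ s in τ..T, exp (hestonA b κ ν c₀ d τ s - hestonB b κ d τ s * y))
      ((∫ s in t..T, (ν * hestonB b κ d t s - c₀ -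
          (κ * hestonB b κ d t s + β ^ 2 / 2 * hestonB b κ d t s ^ 2 - b) * y) *
            exp (hestonA b κ ν c₀ d t s - hestonB b κ d t s * y)) - 1) t := by
  have hA : Continuous fun p : ℝ × ℝ => hestonA b κ ν c₀ d p.1 p.2 :=
    continuous_hestonA hκd
  have hB : Continuous fun p : ℝ × ℝ => hestonB b κ d p.1 p.2 := continuous_hestonB hκd
  have h := hasDerivAt_integral_left_of_continuous_deriv (b := T)
    (f := fun τ s => exp (hestonA b κ ν c₀ d τ s - hestonB b κ d τ s * y))
    (f' := fun τ s => (ν * hestonB b κ d τ s - c₀ -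
          (κ * hestonB b κ d τ s + β ^ 2 / 2 * hestonB b κ d τ s ^ 2 - b) * y) *
            exp (hestonA b κ ν c₀ d τ s - hestonB b κ d τ s * y))
    (by unfold uncurry; fun_prop) (by unfold uncurry; fun_prop)
    (fun τ s => ((hasDerivAt_hestonA hκd τ s).sub
      ((hasDerivAt_hestonB hb hd hκd τ s).mul_const y)).exp.congr_deriv
        (by simp only [Pi.sub_apply]; ring)) t
  simp only [hestonA_self ((abs_nonneg κ).trans_lt hκd), hestonB_self, zero_mul, sub_zero,
    exp_zero] at h
  exact h

lemma integral_heston_generator_eq_zero (hκd : |κ| < d) (y t T : ℝ) :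
    (∫ s in t..T, (ν * hestonB b κ d t s - c₀ -
        (κ * hestonB b κ d t s + β ^ 2 / 2 * hestonB b κ d t s ^ 2 - b) * y) *
          exp (hestonA b κ ν c₀ d t s - hestonB b κ d t s * y))
      + (c₀ - b * y) * (∫ s in t..T, exp (hestonA b κ ν c₀ d t s - hestonB b κ d t s * y))
      + (ν - κ * y) * (∫ s in t..T, (-hestonB b κ d t s) ^ 1 *
          exp (hestonA b κ ν c₀ d t s - hestonB b κ d t s * y))
      + 1 / 2 * β ^ 2 * y * (∫ s in t..T, (-hestonB b κ d t s) ^ 2 *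
          exp (hestonA b κ ν c₀ d t s - hestonB b κ d t s * y)) = 0 := by
  have hA : Continuous (hestonA b κ ν c₀ d t) :=
    (continuous_hestonA hκd).comp (.prodMk_right t)
  have hB : Continuous (hestonB b κ d t) := (continuous_hestonB hκd).comp (.prodMk_right t)
  have hint : ∀ {f : ℝ → ℝ}, Continuous f →
      IntervalIntegrable f MeasureTheory.volume t T :=
    fun hf => hf.intervalIntegrable _ _
  rw [← integral_const_mul, ← integral_const_mul, ← integral_const_mul,
    ← integral_add (hint (by fun_prop)) (hint (by fun_prop)),
    ← integral_add (hint (by fun_prop)) (hint (by fun_prop)),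
    ← integral_add (hint (by fun_prop)) (hint (by fun_prop))]
  exact (integral_congr fun s _ => by ring).trans integral_zero

end Heston

theorem heston_g_pde_general
    (b κ β ν c₀ T δ ψ : ℝ)
    (hb : 0 < b) (hβ : 0 < β)
    (d : ℝ) (hd : d = Real.sqrt (κ ^ 2 + 2 * b * β ^ 2))
    (B A : ℝ → ℝ → ℝ)
    (hB : ∀ t s : ℝ, t ≤ s → B t s = 2 * b * (Real.exp (d * (s - t)) - 1)
      / ((κ + d) * Real.exp (d * (s - t)) - κ + d))
    (hA : ∀ t s : ℝ, t ≤ s →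
      A t s = (4 * b * ν / (κ ^ 2 - d ^ 2)) *
        (Real.log ((κ + d) * Real.exp (d * s) - (κ - d) * Real.exp (d * t))
          - Real.log (2 * d) - (1 / 2) * ((κ + d) * s - (κ - d) * t))
      + c₀ * (s - t))
    (g : ℝ → ℝ → ℝ)
    (hg : ∀ t y : ℝ, g t y = δ ^ ψ * ∫ s in t..T, Real.exp (A t s - B t s * y)) :
    ∀ t ∈ Set.Ico (0 : ℝ) T, ∀ y ∈ Set.Ici (0 : ℝ),
      DifferentiableAt ℝ (fun τ => g τ y) t ∧
      DifferentiableAt ℝ (fun z => g t z) y ∧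
      DifferentiableAt ℝ (deriv (fun z => g t z)) y ∧
      deriv (fun τ => g τ y) t + (c₀ - b * y) * g t y
        + (ν - κ * y) * deriv (fun z => g t z) y
        + (1 / 2) * β ^ 2 * y * deriv (deriv (fun z => g t z)) y
        + δ ^ ψ = 0 := by
  intro t ht y _
  have hd2 : d ^ 2 = κ ^ 2 + 2 * b * β ^ 2 := hd ▸ sq_sqrt (by positivity)
  have hκd : |κ| < d := hd ▸ abs_lt_sqrt_sq_add (by positivity)
  have hg_eq : ∀ τ z, τ ≤ T → g τ z =
      δ ^ ψ * ∫ s in τ..T, exp (hestonA b κ ν c₀ d τ s - hestonB b κ d τ s * z) := by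
    intro τ z hτ
    rw [hg]
    congr 1
    refine integral_congr fun s hs => ?_
    rw [uIcc_of_le hτ] at hs
    simp only [hA τ s hs.1, hB τ s hs.1, hestonA, hestonB]
  have hAt : Continuous (hestonA b κ ν c₀ d t) :=
    (continuous_hestonA hκd).comp (.prodMk_right t)
  have hBt : Continuous (hestonB b κ d t) := (continuous_hestonB hκd).comp (.prodMk_right t)
  have hgt : HasDerivAt (fun τ => g τ y) _ t :=
    ((hasDerivAt_integral_exp_heston hb.ne' hd2 hκd y T t).const_mul _).congr_of_eventuallyEq
      (by filter_upwards [Iio_mem_nhds ht.2] with τ hτ using hg_eq τ y hτ.le)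
  have hgy : ∀ z, HasDerivAt (fun z => g t z) (δ ^ ψ * ∫ s in t..T,
      (-hestonB b κ d t s) ^ 1 * exp (hestonA b κ ν c₀ d t s - hestonB b κ d t s * z)) z := by
    intro z
    have h := (hasDerivAt_integral_pow_mul_exp_sub_mul hAt hBt t T 0 z).const_mul (δ ^ ψ)
    simp only [pow_zero, one_mul] at h
    exact h.congr_of_eventuallyEq (.of_forall fun z => hg_eq t z ht.2.le)
  have hgyy : HasDerivAt (deriv fun z => g t z) (δ ^ ψ * ∫ s in t..T,
      (-hestonB b κ d t s) ^ 2 * exp (hestonA b κ ν c₀ d t s - hestonB b κ d t s * y)) y := by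
    rw [funext fun z => (hgy z).deriv]
    exact (hasDerivAt_integral_pow_mul_exp_sub_mul hAt hBt t T 1 y).const_mul _
  refine ⟨hgt.differentiableAt, (hgy y).differentiableAt, hgyy.differentiableAt, ?_⟩
  rw [hgt.deriv, (hgy y).deriv, hgyy.deriv, hg_eq t y ht.2.le]
  linear_combination δ ^ ψ * integral_heston_generator_eq_zero hκd y t T

/-- The explicit formula `g(t,y) = δ^ψ ∫_t^T e^{A(t,s) − B(t,s)y} ds` solves the
semilinear PDE `g_t + (c₀ − by) g + (ν − κy) g_y + ½β̄² y g_{yy} + δ^ψ = 0` on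
`[0,T) × [0,∞)` in the Heston model. -/
theorem heston_g_pde
    (b κ β ν c₀ T δ ψ : ℝ)
    (hb : 0 < b) (hκ : 0 < κ) (hβ : 0 < β) (hν : 0 < ν) (hT : 0 < T) (hδ : 0 < δ)
    (d : ℝ) (hd : d = Real.sqrt (κ ^ 2 + 2 * b * β ^ 2))
    (B A : ℝ → ℝ → ℝ)
    (hB : ∀ t s : ℝ, t ≤ s → B t s = 2 * b * (Real.exp (d * (s - t)) - 1)
      / ((κ + d) * Real.exp (d * (s - t)) - κ + d))
    (hA : ∀ t s : ℝ, t ≤ s →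
      A t s = (4 * b * ν / (κ ^ 2 - d ^ 2)) *
        (Real.log ((κ + d) * Real.exp (d * s) - (κ - d) * Real.exp (d * t))
          - Real.log (2 * d) - (1 / 2) * ((κ + d) * s - (κ - d) * t))
      + c₀ * (s - t))
    (g : ℝ → ℝ → ℝ)
    (hg : ∀ t y : ℝ, g t y = δ ^ ψ * ∫ s in t..T, Real.exp (A t s - B t s * y)) :
    ∀ t ∈ Set.Ico (0 : ℝ) T, ∀ y ∈ Set.Ici (0 : ℝ),
      DifferentiableAt ℝ (fun τ => g τ y) t ∧
      DifferentiableAt ℝ (fun z => g t z) y ∧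
      DifferentiableAt ℝ (deriv (fun z => g t z)) y ∧
      deriv (fun τ => g τ y) t + (c₀ - b * y) * g t y
        + (ν - κ * y) * deriv (fun z => g t z) y
        + (1 / 2) * β ^ 2 * y * deriv (deriv (fun z => g t z)) y
        + δ ^ ψ = 0 :=
  heston_g_pde_general b κ β ν c₀ T δ ψ hb hβ d hd B A hB hA g hg
end

section
/- Fix real constants b > 0, κ > 0, β̄ > 0, ν > 0, c₀ ∈ ℝ, T > 0, δ > 0 and ψ ∈ ℝ, set d := √(κ² + 2bβ̄²), and for t ≤ s define B(t,s) := 2b(e^{d(s−t)} − 1)/((κ + d)e^{d(s−t)} − κ + d) and A(t,s) := (4bν/(κ² − d²))·[ln((κ+d)e^{ds} − (κ−d)e^{dt}) − ln(2d) − (1/2)((κ+d)s − (κ−d)t)] + c₀(s − t). Define g(t,y) := δ^ψ ∫_t^T e^{A(t,s) − B(t,s)y} ds for (t,y) ∈ [0,T) × [0,∞). Then for every (t,y) ∈ [0,T) × [0,∞): 0 < g(t,y) ≤ δ^ψ e^{|c₀| T} (T − t). -/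
/-!
Both bounds are pointwise bounds on the integrand. `B(t,s) ≥ 0` for `s ≥ t` since numerator and
denominator are visibly nonnegative. For `A`, the bracket multiplying `4bν/(κ² − d²) ≤ 0` is
nonnegative: with weights `(d ± κ)/(2d)`, convexity of `exp` gives
`2d · exp(½((κ+d)s − (κ−d)t)) ≤ (κ+d)e^{ds} − (κ−d)e^{dt}`,
so `A(t,s) ≤ c₀(s − t) ≤ |c₀|T`.
Hence `0 < e^{A − By} ≤ e^{|c₀|T}` on `[t,T]`, and integrating gives both claims.
-/

open Real Set

noncomputable section

namespace Heston

def riccatiB (b κ d t s : ℝ) : ℝ :=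
  2 * b * (exp (d * (s - t)) - 1) / ((κ + d) * exp (d * (s - t)) - κ + d)

def logBracket (κ d t s : ℝ) : ℝ :=
  log ((κ + d) * exp (d * s) - (κ - d) * exp (d * t)) - log (2 * d)
    - (1 / 2) * ((κ + d) * s - (κ - d) * t)

def riccatiA (b κ ν c₀ d t s : ℝ) : ℝ :=
  (4 * b * ν / (κ ^ 2 - d ^ 2)) * logBracket κ d t s + c₀ * (s - t)

variable {b κ ν d : ℝ}

theorem abs_le_of_eq_sqrt {β : ℝ} (hb : 0 ≤ b) (hd : d = √(κ ^ 2 + 2 * b * β ^ 2)) :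
    |κ| ≤ d :=
  hd ▸ abs_le_sqrt (by nlinarith [sq_nonneg β])

theorem two_mul_exp_le (hd : 0 < d) (hκd : |κ| ≤ d) (t s : ℝ) :
    2 * d * exp ((1 / 2) * ((κ + d) * s - (κ - d) * t))
      ≤ (κ + d) * exp (d * s) - (κ - d) * exp (d * t) := by
  obtain ⟨hκ₁, hκ₂⟩ := abs_le.mp hκd
  have hconv := convexOn_exp.2 (mem_univ (d * s)) (mem_univ (d * t))
    (div_nonneg (by linarith : 0 ≤ d + κ) (by positivity : 0 ≤ 2 * d))
    (div_nonneg (by linarith : 0 ≤ d - κ) (by positivity : 0 ≤ 2 * d))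
    (by field_simp; ring)
  have harg : (d + κ) / (2 * d) * (d * s) + (d - κ) / (2 * d) * (d * t)
      = (1 / 2) * ((κ + d) * s - (κ - d) * t) := by
    field_simp; ring
  simp only [smul_eq_mul, harg] at hconv
  calc 2 * d * exp ((1 / 2) * ((κ + d) * s - (κ - d) * t))
      ≤ 2 * d * ((d + κ) / (2 * d) * exp (d * s) + (d - κ) / (2 * d) * exp (d * t)) := by
        gcongr
    _ = (κ + d) * exp (d * s) - (κ - d) * exp (d * t) := by field_simp; ring

theorem logBracket_arg_pos (hd : 0 < d) (hκd : |κ| ≤ d) (t s : ℝ) :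
    0 < (κ + d) * exp (d * s) - (κ - d) * exp (d * t) :=
  lt_of_lt_of_le (by positivity) (two_mul_exp_le hd hκd t s)

theorem logBracket_nonneg (hd : 0 < d) (hκd : |κ| ≤ d) (t s : ℝ) :
    0 ≤ logBracket κ d t s := by
  have h : log (2 * d) + (1 / 2) * ((κ + d) * s - (κ - d) * t)
      ≤ log ((κ + d) * exp (d * s) - (κ - d) * exp (d * t)) := by
    rw [le_log_iff_exp_le (logBracket_arg_pos hd hκd t s), exp_add, exp_log (by positivity)]
    exact two_mul_exp_le hd hκd t s
  unfold logBracket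
  linarith

theorem riccatiA_le (hb : 0 ≤ b) (hν : 0 ≤ ν) (hd : 0 < d) (hκd : |κ| ≤ d)
    (c₀ t s : ℝ) :
    riccatiA b κ ν c₀ d t s ≤ c₀ * (s - t) := by
  have hcoef : 4 * b * ν / (κ ^ 2 - d ^ 2) ≤ 0 :=
    div_nonpos_of_nonneg_of_nonpos (by positivity)
      (sub_nonpos.mpr (sq_le_sq.mpr (hκd.trans_eq (abs_of_pos hd).symm)))
  have := mul_nonpos_of_nonpos_of_nonneg hcoef (logBracket_nonneg hd hκd t s)
  unfold riccatiA
  linarith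

theorem riccatiB_denom_pos (hd : 0 < d) (hκd : |κ| ≤ d) (t s : ℝ) :
    0 < (κ + d) * exp (d * (s - t)) - κ + d := by
  obtain ⟨hκ₁, hκ₂⟩ := abs_le.mp hκd
  rcases hκ₁.eq_or_lt with rfl | hκ₁
  · linarith
  · have : 0 < (κ + d) * exp (d * (s - t)) := mul_pos (by linarith) (exp_pos _)
    linarith

theorem riccatiB_nonneg (hb : 0 ≤ b) (hd : 0 < d) (hκd : |κ| ≤ d) {t s : ℝ}
    (hts : t ≤ s) :
    0 ≤ riccatiB b κ d t s :=
  div_nonneg (mul_nonneg (by positivity)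
    (sub_nonneg.mpr (one_le_exp (mul_nonneg hd.le (sub_nonneg.mpr hts)))))
    (riccatiB_denom_pos hd hκd t s).le

theorem continuous_riccatiA (hd : 0 < d) (hκd : |κ| ≤ d) (c₀ t : ℝ) :
    Continuous (riccatiA b κ ν c₀ d t) := by
  have hlog := fun s => (logBracket_arg_pos hd hκd t s).ne'
  unfold riccatiA logBracket
  fun_prop (disch := exact hlog _)

theorem continuous_riccatiB (hd : 0 < d) (hκd : |κ| ≤ d) (t : ℝ) :
    Continuous (riccatiB b κ d t) := by
  have hden := fun s => (riccatiB_denom_pos hd hκd t s).ne'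
  unfold riccatiB
  fun_prop (disch := exact hden _)

end Heston

theorem intervalIntegral_pos_and_le_of_continuousOn {f : ℝ → ℝ} {a b M : ℝ} (hab : a < b)
    (hf : ContinuousOn f (Icc a b)) (hpos : ∀ x ∈ Icc a b, 0 < f x)
    (hle : ∀ x ∈ Icc a b, f x ≤ M) :
    0 < ∫ x in a..b, f x ∧ ∫ x in a..b, f x ≤ M * (b - a) := by
  have hfi : IntervalIntegrable f MeasureTheory.volume a b := hf.intervalIntegrable_of_Icc hab.le
  refine ⟨intervalIntegral.intervalIntegral_pos_of_pos_on hfi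
    (fun x hx => hpos x (Ioo_subset_Icc_self hx)) hab, ?_⟩
  calc ∫ x in a..b, f x ≤ ∫ _ in a..b, M :=
        intervalIntegral.integral_mono_on hab.le hfi intervalIntegrable_const hle
    _ = M * (b - a) := by rw [intervalIntegral.integral_const, smul_eq_mul, mul_comm]

end

theorem heston_g_bounds_general
    (b κ β ν c₀ T δ ψ : ℝ)
    (hb : 0 < b) (hκ : 0 < κ) (hν : 0 < ν) (hδ : 0 < δ)
    (d : ℝ) (hd : d = Real.sqrt (κ ^ 2 + 2 * b * β ^ 2))
    (B A : ℝ → ℝ → ℝ)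
    (hB : ∀ t s : ℝ, t ≤ s → B t s = 2 * b * (Real.exp (d * (s - t)) - 1)
      / ((κ + d) * Real.exp (d * (s - t)) - κ + d))
    (hA : ∀ t s : ℝ, t ≤ s →
      A t s = (4 * b * ν / (κ ^ 2 - d ^ 2)) *
        (Real.log ((κ + d) * Real.exp (d * s) - (κ - d) * Real.exp (d * t))
          - Real.log (2 * d) - (1 / 2) * ((κ + d) * s - (κ - d) * t))
      + c₀ * (s - t))
    (g : ℝ → ℝ → ℝ)
    (hg : ∀ t y : ℝ, g t y = δ ^ ψ * ∫ s in t..T, Real.exp (A t s - B t s * y)) :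
    ∀ t ∈ Set.Ico (0 : ℝ) T, ∀ y ∈ Set.Ici (0 : ℝ),
      0 < g t y ∧ g t y ≤ δ ^ ψ * Real.exp (|c₀| * T) * (T - t) := by
  rintro t ⟨ht₀, htT⟩ y (hy : 0 ≤ y)
  have hκd : |κ| ≤ d := Heston.abs_le_of_eq_sqrt hb.le hd
  have hd₀ : 0 < d := hd ▸ sqrt_pos.mpr (by positivity)
  have hAB : EqOn (fun s => exp (A t s - B t s * y))
      (fun s => exp (Heston.riccatiA b κ ν c₀ d t s - Heston.riccatiB b κ d t s * y))
      (Icc t T) := fun s hs => by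
    simp only [hA t s hs.1, hB t s hs.1, Heston.riccatiA, Heston.riccatiB, Heston.logBracket]
  have hcont : ContinuousOn (fun s => exp (A t s - B t s * y)) (Icc t T) :=
    (continuous_exp.comp ((Heston.continuous_riccatiA hd₀ hκd c₀ t).sub
      ((Heston.continuous_riccatiB hd₀ hκd t).mul continuous_const))).continuousOn.congr hAB
  have hle : ∀ s ∈ Icc t T, exp (A t s - B t s * y) ≤ exp (|c₀| * T) := by
    intro s hs
    refine (hAB hs).trans_le (exp_le_exp.mpr ?_)
    have hA_le := Heston.riccatiA_le hb.le hν.le hd₀ hκd c₀ t s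
    have hBy := mul_nonneg (Heston.riccatiB_nonneg hb.le hd₀ hκd hs.1) hy
    have hc₀ : c₀ * (s - t) ≤ |c₀| * T :=
      (mul_le_mul_of_nonneg_right (le_abs_self c₀) (by linarith [hs.1])).trans
        (mul_le_mul_of_nonneg_left (by linarith [hs.2]) (abs_nonneg c₀))
    linarith
  obtain ⟨hpos, hbound⟩ := intervalIntegral_pos_and_le_of_continuousOn htT hcont
    (fun s _ => exp_pos _) hle
  have hδψ : 0 < δ ^ ψ := rpow_pos_of_pos hδ ψ
  rw [hg, mul_assoc]
  exact ⟨mul_pos hδψ hpos, mul_le_mul_of_nonneg_left hbound hδψ.le⟩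

/-- Positivity and upper bound for the explicit value-function factor `g` in the
Heston model: `0 < g(t,y) ≤ δ^ψ e^{|c₀|T}(T−t)` on `[0,T) × [0,∞)`. -/
theorem heston_g_bounds
    (b κ β ν c₀ T δ ψ : ℝ)
    (hb : 0 < b) (hκ : 0 < κ) (hβ : 0 < β) (hν : 0 < ν) (hT : 0 < T) (hδ : 0 < δ)
    (d : ℝ) (hd : d = Real.sqrt (κ ^ 2 + 2 * b * β ^ 2))
    (B A : ℝ → ℝ → ℝ)
    (hB : ∀ t s : ℝ, t ≤ s → B t s = 2 * b * (Real.exp (d * (s - t)) - 1)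
      / ((κ + d) * Real.exp (d * (s - t)) - κ + d))
    (hA : ∀ t s : ℝ, t ≤ s →
      A t s = (4 * b * ν / (κ ^ 2 - d ^ 2)) *
        (Real.log ((κ + d) * Real.exp (d * s) - (κ - d) * Real.exp (d * t))
          - Real.log (2 * d) - (1 / 2) * ((κ + d) * s - (κ - d) * t))
      + c₀ * (s - t))
    (g : ℝ → ℝ → ℝ)
    (hg : ∀ t y : ℝ, g t y = δ ^ ψ * ∫ s in t..T, Real.exp (A t s - B t s * y)) :
    ∀ t ∈ Set.Ico (0 : ℝ) T, ∀ y ∈ Set.Ici (0 : ℝ),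
      0 < g t y ∧ g t y ≤ δ ^ ψ * Real.exp (|c₀| * T) * (T - t) :=
  heston_g_bounds_general b κ β ν c₀ T δ ψ hb hκ hν hδ d hd B A hB hA g hg
end
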